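/- Suppose A internally spans [n]² under 2-neighbour bootstrap percolation. Then for every 1 ≤ L ≤ n there exists a rectangle R ⊆ [n]², internally spanned by A, with L ≤ lg(R) ≤ 2L, where lg(R) is the longer side length of R. -/

import Mathlib

/-!
Run the rectangles process: starting from the points of `A`, keep replacing two rectangles at
ℓ¹-distance at most 2 by their bounding box, which they internally span. The maximal rectangles
produced are pairwise far apart, so their union is closed under the 2-neighbour rule; it therefore
contains the square spanned by `A`, which forces the square itself to be produced. Going down the
derivation of the square, a bounding box with longest side above `2 L` has a constituent with
longest side at least `L`: the bounding box of two close rectangles has longest side at most the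
sum of theirs plus one.
-/

def nbr (v w : ℤ × ℤ) : Prop := |w.1 - v.1| + |w.2 - v.2| = 1

def bootClosure (A : Set (ℤ × ℤ)) : Set (ℤ × ℤ) :=
  ⋂₀ {B | A ⊆ B ∧ ∀ v : ℤ × ℤ, 2 ≤ ({w | nbr v w} ∩ B).ncard → v ∈ B}

def rectZ (x0 y0 x1 y1 : ℤ) : Set (ℤ × ℤ) :=
  {v | x0 ≤ v.1 ∧ v.1 ≤ x1 ∧ y0 ≤ v.2 ∧ v.2 ≤ y1}

open Set

theorem nbr_iff_natAbs {v w : ℤ × ℤ} :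
    nbr v w ↔ (w.1 - v.1).natAbs + (w.2 - v.2).natAbs = 1 := by
  simp only [nbr, Int.abs_eq_natAbs]
  omega

theorem nbr_swap {v w : ℤ × ℤ} : nbr v.swap w.swap ↔ nbr v w := by
  simp only [nbr, Prod.fst_swap, Prod.snd_swap, add_comm]

theorem finite_setOf_nbr (v : ℤ × ℤ) : {w | nbr v w}.Finite :=
  (finite_Icc (v - (1, 1)) (v + (1, 1))).subset fun w hw => by
    rw [mem_ofPred_eq, nbr_iff_natAbs] at hw
    simp only [mem_Icc, Prod.le_def, Prod.fst_sub, Prod.snd_sub, Prod.fst_add, Prod.snd_add]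
    omega

def BootClosed (B : Set (ℤ × ℤ)) : Prop :=
  ∀ v : ℤ × ℤ, 2 ≤ ({w | nbr v w} ∩ B).ncard → v ∈ B

theorem bootClosed_iff {B : Set (ℤ × ℤ)} :
    BootClosed B ↔ ∀ v u w, u ∈ B → w ∈ B → u ≠ w → nbr v u → nbr v w → v ∈ B := by
  have hfin v : ({w | nbr v w} ∩ B).Finite := (finite_setOf_nbr v).inter_of_left B
  constructor
  · intro hB v u w hu hw huw hvu hvw
    apply hB v
    calc 2 = ({u, w} : Set (ℤ × ℤ)).ncard := (ncard_pair huw).symm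
      _ ≤ ({w | nbr v w} ∩ B).ncard := ncard_le_ncard (pair_subset ⟨hvu, hu⟩ ⟨hvw, hw⟩) (hfin v)
  · intro h v hv
    obtain ⟨u, w, ⟨hvu, hu⟩, ⟨hvw, hw⟩, huw⟩ := (one_lt_ncard_iff (hfin v)).1 hv
    exact h v u w hu hw huw hvu hvw

theorem BootClosed.mem {B : Set (ℤ × ℤ)} (hB : BootClosed B) {v u w : ℤ × ℤ}
    (hu : u ∈ B) (hw : w ∈ B) (huw : u ≠ w) (hvu : nbr v u) (hvw : nbr v w) : v ∈ B :=
  bootClosed_iff.1 hB v u w hu hw huw hvu hvw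

theorem BootClosed.preimage_swap {B : Set (ℤ × ℤ)} (hB : BootClosed B) :
    BootClosed (Prod.swap ⁻¹' B) :=
  bootClosed_iff.2 fun _ _ _ hu hw huw hvu hvw =>
    hB.mem hu hw (Prod.swap_injective.ne huw) (nbr_swap.2 hvu) (nbr_swap.2 hvw)

theorem bootClosed_Icc (p q : ℤ × ℤ) : BootClosed (Icc p q) :=
  bootClosed_iff.2 fun v u w hu hw huw hvu hvw => by
    have : u.1 ≠ w.1 ∨ u.2 ≠ w.2 := by
      contrapose! huw
      exact Prod.ext huw.1 huw.2
    simp only [mem_Icc, Prod.le_def] at hu hw ⊢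
    rw [nbr_iff_natAbs] at hvu hvw
    omega

theorem subset_bootClosure (A : Set (ℤ × ℤ)) : A ⊆ bootClosure A :=
  subset_sInter fun _ hB => hB.1

theorem bootClosure_subset {A B : Set (ℤ × ℤ)} (hAB : A ⊆ B) (hB : BootClosed B) :
    bootClosure A ⊆ B :=
  sInter_subset_of_mem ⟨hAB, hB⟩

theorem bootClosed_bootClosure (A : Set (ℤ × ℤ)) : BootClosed (bootClosure A) :=
  bootClosed_iff.2 fun v u w hu hw huw hvu hvw => mem_sInter.2 fun B hB =>
    bootClosed_iff.1 hB.2 v u w (mem_sInter.1 hu B hB) (mem_sInter.1 hw B hB) huw hvu hvw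

theorem bootClosure_mono {A B : Set (ℤ × ℤ)} (h : A ⊆ B) : bootClosure A ⊆ bootClosure B :=
  bootClosure_subset (h.trans (subset_bootClosure B)) (bootClosed_bootClosure B)

theorem Int.forall_mem_Icc_of_step {P : ℤ → Prop} {a b x₀ : ℤ} (h₀ : P x₀)
    (hup : ∀ x, x₀ ≤ x → x < b → P x → P (x + 1))
    (hdown : ∀ x, a < x → x ≤ x₀ → P x → P (x - 1)) : ∀ x ∈ Icc a b, P x := by
  rintro x ⟨hax, hxb⟩
  rcases le_total x₀ x with h | h
  · clear hax
    induction x, h using Int.leInduction with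
    | base => exact h₀
    | succ x hx ih => exact hup x hx (by omega) (ih (by omega))
  · clear hxb
    induction x, h using Int.leInductionDown with
    | base => exact h₀
    | pred x hx ih => exact hdown x (by omega) hx (ih (by omega))

section Filling

variable {B : Set (ℤ × ℤ)}

theorem BootClosed.row_mem (hB : BootClosed B) {a b y y' x₀ : ℤ} (hy : (y - y').natAbs = 1)
    (hrow : ∀ x ∈ Icc a b, (x, y') ∈ B) (hx₀ : x₀ ∈ Icc a b) (hseed : (x₀, y) ∈ B) :
    ∀ x ∈ Icc a b, (x, y) ∈ B := by
  obtain ⟨hax₀, hx₀b⟩ := hx₀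
  refine Int.forall_mem_Icc_of_step hseed (fun x hx hxb hxy => ?_) (fun x hax hx hxy => ?_)
  · refine hB.mem hxy (hrow (x + 1) ⟨by omega, by omega⟩) ?_ ?_ ?_ <;>
      simp only [ne_eq, Prod.mk.injEq, nbr_iff_natAbs] <;> omega
  · refine hB.mem hxy (hrow (x - 1) ⟨by omega, by omega⟩) ?_ ?_ ?_ <;>
      simp only [ne_eq, Prod.mk.injEq, nbr_iff_natAbs] <;> omega

theorem BootClosed.Icc_subset_of_row (hB : BootClosed B) {p q : ℤ × ℤ} {y₀ : ℤ}
    (hy₀ : y₀ ∈ Icc p.2 q.2) (hrow : ∀ x ∈ Icc p.1 q.1, (x, y₀) ∈ B)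
    (hseed : ∀ y ∈ Icc p.2 q.2, ∃ x ∈ Icc p.1 q.1, (x, y) ∈ B) : Icc p q ⊆ B := by
  obtain ⟨hpy₀, hy₀q⟩ := hy₀
  have hrows : ∀ y ∈ Icc p.2 q.2, ∀ x ∈ Icc p.1 q.1, (x, y) ∈ B := by
    refine Int.forall_mem_Icc_of_step hrow (fun y hy hyq h => ?_) (fun y hpy hy h => ?_)
    · obtain ⟨x, hx, hxy⟩ := hseed (y + 1) ⟨by omega, by omega⟩
      exact hB.row_mem (by omega) h hx hxy
    · obtain ⟨x, hx, hxy⟩ := hseed (y - 1) ⟨by omega, by omega⟩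
      exact hB.row_mem (by omega) h hx hxy
  rintro v ⟨hpv, hvq⟩
  exact hrows v.2 ⟨hpv.2, hvq.2⟩ v.1 ⟨hpv.1, hvq.1⟩

variable {p q p' q' u w : ℤ × ℤ}

theorem BootClosed.Icc_inf_sup_subset_of_row (hB : BootClosed B) (hR : Icc p q ⊆ B)
    (hS : Icc p' q' ⊆ B) (hu : u ∈ Icc p q) (hw : w ∈ Icc p' q') (hrow : u.2 = w.2)
    (hdist : (u.1 - w.1).natAbs ≤ 2) : Icc (p ⊓ p') (q ⊔ q') ⊆ B := by
  have hu' := hu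
  have hw' := hw
  simp only [mem_Icc, Prod.le_def] at hu' hw'
  refine hB.Icc_subset_of_row (y₀ := u.2) ?_ (fun x hx => ?_) (fun y hy => ?_)
  · simp only [mem_Icc, Prod.snd_inf, Prod.snd_sup]
    omega
  · simp only [mem_Icc, Prod.fst_inf, Prod.fst_sup] at hx
    by_cases hxR : p.1 ≤ x ∧ x ≤ q.1
    · exact hR ⟨⟨hxR.1, hu'.1.2⟩, ⟨hxR.2, hu'.2.2⟩⟩
    by_cases hxS : p'.1 ≤ x ∧ x ≤ q'.1
    · exact hS ⟨⟨hxS.1, hrow ▸ hw'.1.2⟩, ⟨hxS.2, hrow ▸ hw'.2.2⟩⟩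
    -- `x` lies in the gap between the two rectangles, so it is the midpoint of `u` and `w`.
    refine hB.mem (hR hu) (hS hw) ?_ ?_ ?_ <;>
      simp only [ne_eq, Prod.ext_iff, nbr_iff_natAbs] <;> omega
  · simp only [mem_Icc, Prod.snd_inf, Prod.snd_sup, Prod.fst_inf, Prod.fst_sup] at hy ⊢
    by_cases hyR : p.2 ≤ y ∧ y ≤ q.2
    · exact ⟨u.1, by omega, hR ⟨⟨hu'.1.1, hyR.1⟩, ⟨hu'.2.1, hyR.2⟩⟩⟩
    · exact ⟨w.1, by omega, hS ⟨⟨hw'.1.1, by omega⟩, ⟨hw'.2.1, by omega⟩⟩⟩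

theorem preimage_swap_Icc (p q : ℤ × ℤ) : Prod.swap ⁻¹' Icc p q = Icc p.swap q.swap := by
  ext v
  simp only [mem_preimage, mem_Icc, Prod.le_def, Prod.fst_swap, Prod.snd_swap]
  tauto

theorem BootClosed.Icc_inf_sup_subset_of_col (hB : BootClosed B) (hR : Icc p q ⊆ B)
    (hS : Icc p' q' ⊆ B) (hu : u ∈ Icc p q) (hw : w ∈ Icc p' q') (hcol : u.1 = w.1)
    (hdist : (u.2 - w.2).natAbs ≤ 2) : Icc (p ⊓ p') (q ⊔ q') ⊆ B := by
  have hswap := hB.preimage_swap.Icc_inf_sup_subset_of_row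
    (preimage_swap_Icc p q ▸ preimage_mono hR) (preimage_swap_Icc p' q' ▸ preimage_mono hS)
    (u := u.swap) (by rwa [← preimage_swap_Icc, mem_preimage, Prod.swap_swap])
    (w := w.swap) (by rwa [← preimage_swap_Icc, mem_preimage, Prod.swap_swap]) hcol hdist
  rwa [← Prod.swap_inf, ← Prod.swap_sup, ← preimage_swap_Icc,
    Prod.swap_surjective.preimage_subset_preimage_iff] at hswap

theorem BootClosed.Icc_inf_sup_subset (hB : BootClosed B) (hR : Icc p q ⊆ B) (hS : Icc p' q' ⊆ B)
    (hu : u ∈ Icc p q) (hw : w ∈ Icc p' q')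
    (hdist : (u.1 - w.1).natAbs + (u.2 - w.2).natAbs ≤ 2) : Icc (p ⊓ p') (q ⊔ q') ⊆ B := by
  -- Pass through the corner `(w.1, u.2)`, which shares a column with `w` and a row with `u`.
  have hc : (w.1, u.2) ∈ B := by
    by_cases h₁ : w.1 = u.1
    · exact hR (by simpa [h₁] using hu)
    by_cases h₂ : u.2 = w.2
    · exact hS (by simpa [h₂] using hw)
    refine hB.mem (hR hu) (hS hw) ?_ ?_ ?_ <;>
      simp only [ne_eq, Prod.ext_iff, nbr_iff_natAbs] <;> omega
  have hcS : Icc ((w.1, u.2) ⊓ p') ((w.1, u.2) ⊔ q') ⊆ B :=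
    hB.Icc_inf_sup_subset_of_col (by simpa using hc) hS (left_mem_Icc.2 le_rfl) hw rfl
      (by omega)
  have hRcS := hB.Icc_inf_sup_subset_of_row hR hcS hu ⟨inf_le_left, le_sup_left⟩ rfl (by omega)
  simp only [mem_Icc, Prod.le_def] at hu hw
  have hinf : p ⊓ ((w.1, u.2) ⊓ p') = p ⊓ p' := Prod.ext (by simp; omega) (by simp; omega)
  have hsup : q ⊔ ((w.1, u.2) ⊔ q') = q ⊔ q' := Prod.ext (by simp; omega) (by simp; omega)
  rwa [hinf, hsup] at hRcS

end Filling

def Close (R S : Set (ℤ × ℤ)) : Prop :=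
  ∃ u ∈ R, ∃ w ∈ S, (u.1 - w.1).natAbs + (u.2 - w.2).natAbs ≤ 2

/-- The rectangles process: `Derived A p q` says that the rectangle `Icc p q` is reached from the
one-point rectangles of `A` by repeatedly replacing two close rectangles by their bounding box. -/
inductive Derived (A : Set (ℤ × ℤ)) : ℤ × ℤ → ℤ × ℤ → Prop
  | singleton {p : ℤ × ℤ} : p ∈ A → Derived A p p
  | merge {p q p' q' : ℤ × ℤ} : Derived A p q → Derived A p' q' →
      Close (Icc p q) (Icc p' q') → Derived A (p ⊓ p') (q ⊔ q')

def longSide (p q : ℤ × ℤ) : ℤ := max (q.1 - p.1 + 1) (q.2 - p.2 + 1)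

theorem longSide_inf_sup_le {p q p' q' : ℤ × ℤ} (h : Close (Icc p q) (Icc p' q')) :
    longSide (p ⊓ p') (q ⊔ q') ≤ longSide p q + longSide p' q' + 1 := by
  obtain ⟨u, hu, w, hw, hdist⟩ := h
  simp only [mem_Icc, Prod.le_def] at hu hw
  simp only [longSide, Prod.fst_inf, Prod.snd_inf, Prod.fst_sup, Prod.snd_sup]
  omega

namespace Derived

variable {A : Set (ℤ × ℤ)} {p q : ℤ × ℤ}

theorem le (h : Derived A p q) : p ≤ q := by
  induction h with
  | singleton => exact le_rfl
  | merge _ _ _ ih _ => exact inf_le_left.trans (ih.trans le_sup_left)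

theorem le_of_subset_Icc {m M : ℤ × ℤ} (hA : A ⊆ Icc m M) (h : Derived A p q) :
    m ≤ p ∧ q ≤ M := by
  induction h with
  | singleton hp => exact hA hp
  | merge _ _ _ ih ih' => exact ⟨le_inf ih.1 ih'.1, sup_le ih.2 ih'.2⟩

theorem Icc_subset_bootClosure (h : Derived A p q) : Icc p q ⊆ bootClosure (A ∩ Icc p q) := by
  induction h with
  | @singleton p hp => simpa using subset_bootClosure (A ∩ Icc p p) ⟨hp, left_mem_Icc.2 le_rfl⟩
  | @merge p q p' q' _ _ hclose ih ih' =>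
    obtain ⟨u, hu, w, hw, hdist⟩ := hclose
    have hR : Icc p q ⊆ Icc (p ⊓ p') (q ⊔ q') := Icc_subset_Icc inf_le_left le_sup_left
    have hS : Icc p' q' ⊆ Icc (p ⊓ p') (q ⊔ q') := Icc_subset_Icc inf_le_right le_sup_right
    exact (bootClosed_bootClosure _).Icc_inf_sup_subset
      (ih.trans (bootClosure_mono (inter_subset_inter_right A hR)))
      (ih'.trans (bootClosure_mono (inter_subset_inter_right A hS))) hu hw hdist

theorem exists_longSide_mem_Icc (h : Derived A p q) {L : ℤ} (hL : 0 < L)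
    (hLpq : L ≤ longSide p q) : ∃ p' q', Derived A p' q' ∧ Icc p' q' ⊆ Icc p q ∧
      L ≤ longSide p' q' ∧ longSide p' q' ≤ 2 * L := by
  induction h with
  | singleton hp =>
    refine ⟨_, _, .singleton hp, subset_rfl, hLpq, ?_⟩
    simp only [longSide, sub_self, zero_add, max_self] at hLpq ⊢
    omega
  | @merge p q p' q' hR hS hclose ih ih' =>
    by_cases hshort : longSide (p ⊓ p') (q ⊔ q') ≤ 2 * L
    · exact ⟨_, _, .merge hR hS hclose, subset_rfl, hLpq, hshort⟩
    have hsplit := longSide_inf_sup_le hclose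
    obtain hlong | hlong := le_or_gt L (longSide p q)
    · obtain ⟨p₀, q₀, h₀, hsub, hL₀⟩ := ih hlong
      exact ⟨p₀, q₀, h₀, hsub.trans (Icc_subset_Icc inf_le_left le_sup_left), hL₀⟩
    · obtain ⟨p₀, q₀, h₀, hsub, hL₀⟩ := ih' (by omega)
      exact ⟨p₀, q₀, h₀, hsub.trans (Icc_subset_Icc inf_le_right le_sup_right), hL₀⟩

end Derived

def derivedRects (A : Set (ℤ × ℤ)) : Set (Set (ℤ × ℤ)) :=
  {R | ∃ p q, Derived A p q ∧ Icc p q = R}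

section Maximal

variable {A : Set (ℤ × ℤ)}

theorem subset_of_maximal_of_close {R S : Set (ℤ × ℤ)} (hR : Maximal (· ∈ derivedRects A) R)
    (hS : S ∈ derivedRects A) (h : Close R S) : S ⊆ R := by
  obtain ⟨p, q, hpq, rfl⟩ := hR.1
  obtain ⟨p', q', hpq', rfl⟩ := hS
  have hmerge : Icc (p ⊓ p') (q ⊔ q') ⊆ Icc p q :=
    hR.2 ⟨_, _, hpq.merge hpq' h, rfl⟩ (Icc_subset_Icc inf_le_left le_sup_left)
  exact (Icc_subset_Icc inf_le_right le_sup_right).trans hmerge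

theorem bootClosed_sUnion_maximal :
    BootClosed (⋃₀ {R | Maximal (· ∈ derivedRects A) R}) :=
  bootClosed_iff.2 fun v u w ⟨R, hR, hu⟩ ⟨S, hS, hw⟩ huw hvu hvw => by
    have hwR : w ∈ R := subset_of_maximal_of_close hR hS.1
      ⟨u, hu, w, hw, by rw [nbr_iff_natAbs] at hvu hvw; omega⟩ hw
    obtain ⟨p, q, -, rfl⟩ := hR.1
    exact ⟨_, hR, (bootClosed_Icc p q).mem hu hwR huw hvu hvw⟩

theorem finite_derivedRects {m M : ℤ × ℤ} (hA : A ⊆ Icc m M) : (derivedRects A).Finite :=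
  (finite_Icc m M).finite_subsets.subset fun _ ⟨_, _, hpq, hR⟩ =>
    hR ▸ Icc_subset_Icc (hpq.le_of_subset_Icc hA).1 (hpq.le_of_subset_Icc hA).2

theorem derived_of_Icc_subset_bootClosure {m M : ℤ × ℤ} (hmM : m ≤ M) (hA : A ⊆ Icc m M)
    (hspan : Icc m M ⊆ bootClosure A) : Derived A m M := by
  set U := ⋃₀ {R | Maximal (· ∈ derivedRects A) R}
  have hAU : A ⊆ U := fun a ha => by
    obtain ⟨R, haR, hR⟩ := (finite_derivedRects hA).exists_le_maximal
      (⟨a, a, .singleton ha, rfl⟩ : Icc a a ∈ derivedRects A)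
    exact ⟨R, hR, haR (left_mem_Icc.2 le_rfl)⟩
  have hU : Icc m M ⊆ U := hspan.trans (bootClosure_subset hAU bootClosed_sUnion_maximal)
  obtain ⟨R, hR, hmR⟩ := hU (left_mem_Icc.2 hmM)
  obtain ⟨p, q, hpq, rfl⟩ := hR.1
  obtain ⟨hmp, hqM⟩ := hpq.le_of_subset_Icc hA
  obtain rfl : p = m := le_antisymm hmR.1 hmp
  have hnext : ∀ w ∈ Icc p M, (w.1 - q.1).natAbs + (w.2 - q.2).natAbs ≤ 2 → w ≤ q :=
    fun w hw hdist => by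
      obtain ⟨S, hS, hwS⟩ := hU hw
      exact (subset_of_maximal_of_close hR hS.1 ⟨q, right_mem_Icc.2 hpq.le, w, hwS, by omega⟩
        hwS).2
  have hq₁ := hnext (q.1 + 1, q.2)
  have hq₂ := hnext (q.1, q.2 + 1)
  simp only [mem_Icc, Prod.le_def] at hq₁ hq₂ hmR hqM
  obtain rfl : q = M := Prod.ext (by omega) (by omega)
  exact hpq

end Maximal

theorem rectZ_eq_Icc (x₀ y₀ x₁ y₁ : ℤ) : rectZ x₀ y₀ x₁ y₁ = Icc (x₀, y₀) (x₁, y₁) := by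
  ext v
  simp only [rectZ, mem_ofPred_eq, mem_Icc, Prod.le_def]
  tauto

theorem stmt13_general (n : ℕ) (A : Set (ℤ × ℤ))
    (hA : A ⊆ rectZ 1 1 n n) (hperc : rectZ 1 1 n n ⊆ bootClosure A)
    (L : ℕ) (hL1 : 1 ≤ L) (hLn : L ≤ n) :
    ∃ x0 y0 x1 y1 : ℤ, x0 ≤ x1 ∧ y0 ≤ y1 ∧
      rectZ x0 y0 x1 y1 ⊆ rectZ 1 1 n n ∧
      rectZ x0 y0 x1 y1 ⊆ bootClosure (A ∩ rectZ x0 y0 x1 y1) ∧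
      (L : ℤ) ≤ max (x1 - x0 + 1) (y1 - y0 + 1) ∧
      max (x1 - x0 + 1) (y1 - y0 + 1) ≤ 2 * (L : ℤ) := by
  simp only [rectZ_eq_Icc] at hA hperc ⊢
  have hsquare : Derived A (1, 1) (n, n) :=
    derived_of_Icc_subset_bootClosure (Prod.mk_le_mk.2 ⟨by omega, by omega⟩) hA hperc
  obtain ⟨p, q, hpq, hsub, hL⟩ :=
    hsquare.exists_longSide_mem_Icc (L := L) (by omega) (by simp [longSide]; omega)
  exact ⟨p.1, p.2, q.1, q.2, hpq.le.1, hpq.le.2, hsub, hpq.Icc_subset_bootClosure, hL⟩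

/-- The Aizenman–Lebowitz lemma: if `A` internally spans `[n]²` then for every
`1 ≤ L ≤ n` there is an internally spanned rectangle whose longer side length
lies between `L` and `2L`. -/
theorem stmt13 (n : ℕ) (hn : 1 ≤ n) (A : Set (ℤ × ℤ))
    (hA : A ⊆ rectZ 1 1 n n) (hperc : rectZ 1 1 n n ⊆ bootClosure A)
    (L : ℕ) (hL1 : 1 ≤ L) (hLn : L ≤ n) :
    ∃ x0 y0 x1 y1 : ℤ, x0 ≤ x1 ∧ y0 ≤ y1 ∧
      rectZ x0 y0 x1 y1 ⊆ rectZ 1 1 n n ∧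
      rectZ x0 y0 x1 y1 ⊆ bootClosure (A ∩ rectZ x0 y0 x1 y1) ∧
      (L : ℤ) ≤ max (x1 - x0 + 1) (y1 - y0 + 1) ∧
      max (x1 - x0 + 1) (y1 - y0 + 1) ≤ 2 * (L : ℤ) :=
  stmt13_general n A hA hperc L hL1 hLn
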